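/- arXiv:2501.08942 — 7 statements merged into one kernel-verified Lean document; each statement's English description precedes it below -/
import Mathlib

section
/- Let S, T be monoids and Γ an abelian group. For any 2-cocycle μ on S×T, the map α_μ: S×T → Γ defined by α_μ(s,t) = μ((s,e),(e,t))/μ((e,t),(s,e)) is a bimultiplicative pairing, i.e., α_μ(ss',t) = α_μ(s,t)α_μ(s',t) and α_μ(s,tt') = α_μ(s,t)α_μ(s,t'). -/
/-- A 2-cocycle on a monoid `M` with values in an abelian group `Γ` (trivial action). -/
def IsCocycle {M Γ : Type*} [Monoid M] [CommGroup Γ] (μ : M → M → Γ) : Prop :=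
  (∀ x y z, μ x (y * z) * μ y z = μ x y * μ (x * y) z) ∧
    (∀ x, μ x 1 = 1) ∧ (∀ x, μ 1 x = 1)

lemma cocycle_comm_pairing_mul {M Γ : Type*} [Monoid M] [CommGroup Γ]
    (μ : M → M → Γ) (hμ : IsCocycle μ) (a a' b : M)
    (h1 : a * b = b * a) (h2 : a' * b = b * a') :
    μ (a * a') b / μ b (a * a') = (μ a b / μ b a) * (μ a' b / μ b a') := by
  have e1 := hμ.1 a a' b
  have e2 := hμ.1 a b a'
  have e3 := hμ.1 b a a'
  rw [h2] at e1
  rw [h1] at e2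
  rw [div_mul_div_comm, div_eq_div_iff_mul_eq_mul]
  apply mul_left_cancel (a := μ a a')
  calc μ a a' * (μ (a * a') b * (μ b a * μ b a'))
      = (μ a a' * μ (a * a') b) * (μ b a * μ b a') := by
        simp [mul_comm, mul_left_comm, mul_assoc]
    _ = (μ a (b * a') * μ a' b) * (μ b a * μ b a') := by rw [← e1]
    _ = (μ a (b * a') * μ b a') * (μ a' b * μ b a) := by
        simp [mul_comm, mul_left_comm, mul_assoc]
    _ = (μ a b * μ (b * a) a') * (μ a' b * μ b a) := by rw [e2]
    _ = (μ b a * μ (b * a) a') * (μ a b * μ a' b) := by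
        simp [mul_comm, mul_left_comm, mul_assoc]
    _ = (μ b (a * a') * μ a a') * (μ a b * μ a' b) := by rw [← e3]
    _ = μ a a' * (μ a b * μ a' b * μ b (a * a')) := by
        simp [mul_comm, mul_left_comm, mul_assoc]

/-- For any 2-cocycle `μ` on `S × T`, the map `α_μ(s,t) = μ((s,1),(1,t))/μ((1,t),(s,1))` is a
bimultiplicative pairing. -/
theorem pairing_of_cocycle_bimultiplicative {S T Γ : Type*} [Monoid S] [Monoid T] [CommGroup Γ]
    (μ : S × T → S × T → Γ) (hμ : IsCocycle μ) :
    (∀ s s' t, (μ (s * s', 1) ((1 : S), t) / μ ((1 : S), t) (s * s', 1)) =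
        (μ (s, 1) ((1 : S), t) / μ ((1 : S), t) (s, 1)) *
        (μ (s', 1) ((1 : S), t) / μ ((1 : S), t) (s', 1))) ∧
    (∀ s t t', (μ (s, (1 : T)) (1, t * t') / μ (1, t * t') (s, (1 : T))) =
        (μ (s, (1 : T)) (1, t) / μ (1, t) (s, (1 : T))) *
        (μ (s, (1 : T)) (1, t') / μ (1, t') (s, (1 : T)))) := by
  constructor
  · intro s s' t
    have h := cocycle_comm_pairing_mul μ hμ (s, (1 : T)) (s', (1 : T)) ((1 : S), t)
      (by simp [Prod.ext_iff]) (by simp [Prod.ext_iff])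
    simpa [Prod.mk_mul_mk] using h
  · intro s t t'
    have h := cocycle_comm_pairing_mul μ hμ ((1 : S), t) ((1 : S), t') (s, (1 : T))
      (by simp [Prod.ext_iff]) (by simp [Prod.ext_iff])
    have h2 : μ (s, (1:T)) ((1:S), t) / μ ((1:S), t) (s, (1:T)) *
        (μ (s, (1:T)) ((1:S), t') / μ ((1:S), t') (s, (1:T))) =
        (μ ((1:S), t) (s, (1:T)) / μ (s, (1:T)) ((1:S), t) *
        (μ ((1:S), t') (s, (1:T)) / μ (s, (1:T)) ((1:S), t')))⁻¹ := by
      simp [div_eq_mul_inv, mul_comm, mul_left_comm]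
    rw [h2]
    simp only [Prod.mk_mul_mk, mul_one, one_mul] at h
    rw [← h]
    simp [div_eq_mul_inv, mul_comm]
end

section
/- The Yamazaki factorization map Y: Z²(S×T, Γ) → Z²(S, Γ) × Z²(T, Γ) × P(S,T,Γ), sending μ to (μ|_S, μ|_T, α_μ) where α_μ(s,t) = μ((s,e),(e,t))/μ((e,t),(s,e)), is a surjective group homomorphism for any monoids S, T and abelian group Γ. -/
/-- The group of 2-cocycles `Z²(M, Γ)` under pointwise multiplication. -/
def Z2 (M Γ : Type*) [Monoid M] [CommGroup Γ] : Subgroup (M → M → Γ) where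
  carrier := {μ | IsCocycle μ}
  mul_mem' := by
    rintro μ ν ⟨h1, h2, h3⟩ ⟨g1, g2, g3⟩
    refine ⟨fun x y z => ?_, fun x => ?_, fun x => ?_⟩ <;>
      simp only [Pi.mul_apply, h2, h3, g2, g3, mul_one]
    rw [mul_mul_mul_comm, h1 x y z, g1 x y z, mul_mul_mul_comm]
  one_mem' := ⟨fun x y z => by simp, fun x => rfl, fun x => rfl⟩
  inv_mem' := by
    rintro μ ⟨h1, h2, h3⟩
    refine ⟨fun x y z => ?_, fun x => ?_, fun x => ?_⟩ <;>
      simp only [Pi.inv_apply, h2, h3, inv_one]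
    rw [← mul_inv, h1 x y z, mul_inv]

/-- A 2-coboundary: `δh(x,y) = h(x)h(y)/h(xy)` for some `h` with `h(1)=1`. -/
def IsCoboundary {M Γ : Type*} [Monoid M] [CommGroup Γ] (μ : M → M → Γ) : Prop :=
  ∃ h : M → Γ, h 1 = 1 ∧ ∀ x y, μ x y = h x * h y / h (x * y)

/-- The group of 2-coboundaries `B²(M, Γ)`. -/
def B2 (M Γ : Type*) [Monoid M] [CommGroup Γ] : Subgroup (M → M → Γ) where
  carrier := {μ | IsCoboundary μ}
  mul_mem' := by
    rintro μ ν ⟨h, h1, h2⟩ ⟨g, g1, g2⟩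
    refine ⟨h * g, by simp [h1, g1], fun x y => ?_⟩
    simp only [Pi.mul_apply, h2, g2]
    rw [div_mul_div_comm, mul_mul_mul_comm]
  one_mem' := ⟨1, rfl, fun x y => by simp⟩
  inv_mem' := by
    rintro μ ⟨h, h1, h2⟩
    refine ⟨h⁻¹, by simp [h1], fun x y => ?_⟩
    simp only [Pi.inv_apply, h2]
    rw [div_eq_mul_inv, div_eq_mul_inv, mul_inv, mul_inv, inv_inv]

instance {M Γ : Type*} [Monoid M] [CommGroup Γ] :
    ((B2 M Γ).subgroupOf (Z2 M Γ)).Normal := Subgroup.normal_of_comm _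

/-- Second cohomology `H²(M,Γ) = Z²(M,Γ)/B²(M,Γ)` of a monoid with trivial coefficients. -/
def H2 (M Γ : Type*) [Monoid M] [CommGroup Γ] :=
  Z2 M Γ ⧸ (B2 M Γ).subgroupOf (Z2 M Γ)

instance {M Γ : Type*} [Monoid M] [CommGroup Γ] : CommGroup (H2 M Γ) :=
  inferInstanceAs (CommGroup (Z2 M Γ ⧸ (B2 M Γ).subgroupOf (Z2 M Γ)))

/-- Restriction of a cocycle on `S × T` to the submonoid `S × {1}`. -/
def resFst {S T Γ : Type*} [Monoid S] [Monoid T] [CommGroup Γ]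
    (μ : Z2 (S × T) Γ) : Z2 S Γ := by
  refine ⟨fun s s' => μ.1 (s, 1) (s', 1), ?_, fun x => ?_, fun x => ?_⟩
  · intro x y z
    have := μ.2.1 (x, 1) (y, 1) (z, 1)
    simpa using this
  · exact μ.2.2.1 (x, 1)
  · exact μ.2.2.2 (x, 1)

/-- Restriction of a cocycle on `S × T` to the submonoid `{1} × T`. -/
def resSnd {S T Γ : Type*} [Monoid S] [Monoid T] [CommGroup Γ]
    (μ : Z2 (S × T) Γ) : Z2 T Γ := by
  refine ⟨fun t t' => μ.1 (1, t) (1, t'), ?_, fun x => ?_, fun x => ?_⟩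
  · intro x y z
    have := μ.2.1 (1, x) (1, y) (1, z)
    simpa using this
  · exact μ.2.2.1 (1, x)
  · exact μ.2.2.2 (1, x)

/-- The group of bimultiplicative pairings `P(S,T,Γ)`. -/
def Pairings (S T Γ : Type*) [Monoid S] [Monoid T] [CommGroup Γ] :
    Subgroup (S → T → Γ) where
  carrier := {α | (∀ s s' t, α (s * s') t = α s t * α s' t) ∧
    (∀ s t t', α s (t * t') = α s t * α s t')}
  mul_mem' := by
    rintro α β ⟨a1, a2⟩ ⟨b1, b2⟩
    constructor <;> intro s s' t <;>
      simp only [Pi.mul_apply, a1, a2, b1, b2, mul_mul_mul_comm]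
  one_mem' := ⟨fun _ _ _ => by simp, fun _ _ _ => by simp⟩
  inv_mem' := by
    rintro α ⟨a1, a2⟩
    constructor <;> intro s s' t <;>
      simp only [Pi.inv_apply, a1, a2, mul_inv]

/-!
For a 2-cocycle `μ` and a fixed `c`, the ratio `x ↦ μ x c / μ c x` is multiplicative on the
elements commuting with `c`; since `(s, 1)` and `(1, t)` commute in `S × T`, this makes `α_μ`
bimultiplicative. The map is multiplicative because all three components are evaluations.
Conversely `((s, t), (s', t')) ↦ ν s s' * ξ t t' * α s t'` is a cocycle on `S × T` (a product
of two pulled-back cocycles and the cocycle `(p, q) ↦ α p.1 q.2`) whose image is `(ν, ξ, α)`.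
-/

section Cocycle

variable {M N Γ : Type*} [Monoid M] [Monoid N] [CommGroup Γ]

theorem IsCocycle.div_swap_mul_of_commute {μ : M → M → Γ} (h : IsCocycle μ) {a b c : M}
    (hac : Commute a c) (hbc : Commute b c) :
    μ (a * b) c / μ c (a * b) = (μ a c / μ c a) * (μ b c / μ c b) := by
  -- the cocycle identities at `(a, b, c)`, `(a, c, b)`, `(c, a, b)`, with `c` moved to the left
  have E1 := h.1 a b c
  have E2 := h.1 a c b
  have E3 := h.1 c a b
  rw [hbc.eq] at E1
  rw [hac.eq] at E2
  have key : μ (a * b) c * (μ c a * μ c b) = μ c (a * b) * (μ a c * μ b c) := by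
    apply mul_left_cancel (a := μ a b * μ a (c * b))
    calc μ a b * μ a (c * b) * (μ (a * b) c * (μ c a * μ c b))
        = (μ a b * μ (a * b) c) * ((μ a (c * b) * μ c b) * μ c a) := by ac_rfl
      _ = (μ a (c * b) * μ b c) * ((μ a c * μ (c * a) b) * μ c a) := by rw [← E1, E2]
      _ = (μ a (c * b) * μ b c) * (μ a c * (μ c a * μ (c * a) b)) := by ac_rfl
      _ = (μ a (c * b) * μ b c) * (μ a c * (μ c (a * b) * μ a b)) := by rw [← E3]
      _ = μ a b * μ a (c * b) * (μ c (a * b) * (μ a c * μ b c)) := by ac_rfl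
  rw [div_mul_div_comm, div_eq_div_iff_mul_eq_mul, key]
  ac_rfl

theorem IsCocycle.comp_monoidHom {μ : N → N → Γ} (h : IsCocycle μ) (f : M →* N) :
    IsCocycle fun x y => μ (f x) (f y) := by
  refine ⟨fun x y z => ?_, fun x => ?_, fun x => ?_⟩ <;> simp only [map_mul, map_one]
  exacts [h.1 _ _ _, h.2.1 _, h.2.2 _]

namespace Z2

@[simp]
theorem apply_one_right (μ : Z2 M Γ) (x : M) : μ.1 x 1 = 1 := μ.2.2.1 x

@[simp]
theorem apply_one_left (μ : Z2 M Γ) (x : M) : μ.1 1 x = 1 := μ.2.2.2 x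

def comap (f : M →* N) (μ : Z2 N Γ) : Z2 M Γ :=
  ⟨fun x y => μ.1 (f x) (f y), IsCocycle.comp_monoidHom μ.2 f⟩

end Z2

end Cocycle

section Product

variable {S T Γ : Type*} [Monoid S] [Monoid T] [CommGroup Γ]

/-- The pairing `α_μ` of the Yamazaki map. -/
def yamazakiPairing (μ : S × T → S × T → Γ) : S → T → Γ :=
  fun s t => μ (s, 1) (1, t) / μ (1, t) (s, 1)

theorem yamazakiPairing_mem_pairings (μ : Z2 (S × T) Γ) :
    yamazakiPairing μ.1 ∈ Pairings S T Γ := by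
  have hcomm : ∀ (s : S) (t : T), Commute ((s, 1) : S × T) (1, t) := fun s t => by
    simp [Commute, SemiconjBy]
  refine ⟨fun s s' t => ?_, fun s t t' => ?_⟩
  · simpa [yamazakiPairing] using
      μ.2.div_swap_mul_of_commute (hcomm s t) (hcomm s' t)
  · have h := μ.2.div_swap_mul_of_commute (hcomm s t).symm (hcomm s t').symm
    -- with `c = (s, 1)` the ratio is `(α_μ s ·)⁻¹`
    rw [← inv_inj] at h
    refine (?_ : _ = _).trans (mul_comm _ _)
    simpa [yamazakiPairing, mul_inv] using h

theorem yamazakiPairing_mul (μ ν : S × T → S × T → Γ) :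
    yamazakiPairing (μ * ν) = yamazakiPairing μ * yamazakiPairing ν := by
  funext s t
  exact (div_mul_div_comm _ _ _ _).symm

namespace Pairings

@[simp]
theorem apply_one_right (α : Pairings S T Γ) (s : S) : α.1 s 1 = 1 := by
  simpa using (α.2.2 s 1 1).symm

@[simp]
theorem apply_one_left (α : Pairings S T Γ) (t : T) : α.1 1 t = 1 := by
  simpa using (α.2.1 1 1 t).symm

theorem isCocycle_apply_fst_snd (α : Pairings S T Γ) :
    IsCocycle fun p q : S × T => α.1 p.1 q.2 := by
  obtain ⟨hmul_left, hmul_right⟩ := α.2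
  refine ⟨fun x y z => ?_, fun x => apply_one_right α x.1, fun x => apply_one_left α x.2⟩
  simp only [Prod.fst_mul, Prod.snd_mul, hmul_left, hmul_right]
  ac_rfl

def toZ2 (α : Pairings S T Γ) : Z2 (S × T) Γ :=
  ⟨fun p q => α.1 p.1 q.2, isCocycle_apply_fst_snd α⟩

end Pairings

def yamazakiLift (ν : Z2 S Γ) (ξ : Z2 T Γ) (α : Pairings S T Γ) : Z2 (S × T) Γ :=
  Z2.comap (MonoidHom.fst S T) ν * Z2.comap (MonoidHom.snd S T) ξ * Pairings.toZ2 α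

theorem resFst_yamazakiLift (ν : Z2 S Γ) (ξ : Z2 T Γ) (α : Pairings S T Γ) :
    resFst (yamazakiLift ν ξ α) = ν := by
  ext s s'
  simp [resFst, yamazakiLift, Z2.comap, Pairings.toZ2]

theorem resSnd_yamazakiLift (ν : Z2 S Γ) (ξ : Z2 T Γ) (α : Pairings S T Γ) :
    resSnd (yamazakiLift ν ξ α) = ξ := by
  ext t t'
  simp [resSnd, yamazakiLift, Z2.comap, Pairings.toZ2]

theorem yamazakiPairing_yamazakiLift (ν : Z2 S Γ) (ξ : Z2 T Γ) (α : Pairings S T Γ) :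
    yamazakiPairing (yamazakiLift ν ξ α).1 = α := by
  funext s t
  simp [yamazakiPairing, yamazakiLift, Z2.comap, Pairings.toZ2]

end Product

/-- The Yamazaki factorization map `Y : Z²(S×T,Γ) → Z²(S,Γ) × Z²(T,Γ) × P(S,T,Γ)`, sending
`μ` to `(μ|_S, μ|_T, α_μ)` with `α_μ(s,t) = μ((s,1),(1,t))/μ((1,t),(s,1))`, is a surjective
group homomorphism: it is multiplicative, lands in pairings, and hits every triple of a
cocycle on `S`, a cocycle on `T`, and a bimultiplicative pairing. -/
theorem yamazaki_map_surjective_hom (S T Γ : Type*) [Monoid S] [Monoid T] [CommGroup Γ] :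
    (∀ μ : Z2 (S × T) Γ,
        (fun s t => μ.1 (s, 1) (1, t) / μ.1 (1, t) (s, 1)) ∈ Pairings S T Γ) ∧
    (∀ μ ν : Z2 (S × T) Γ,
        resFst (μ * ν) = resFst μ * resFst ν ∧
        resSnd (μ * ν) = resSnd μ * resSnd ν ∧
        (fun s t => (μ * ν).1 (s, 1) (1, t) / (μ * ν).1 (1, t) (s, 1)) =
          (fun s t => μ.1 (s, 1) (1, t) / μ.1 (1, t) (s, 1)) *
          (fun s t => ν.1 (s, 1) (1, t) / ν.1 (1, t) (s, 1))) ∧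
    (∀ (ν : Z2 S Γ) (ξ : Z2 T Γ) (α : Pairings S T Γ),
        ∃ μ : Z2 (S × T) Γ, resFst μ = ν ∧ resSnd μ = ξ ∧
          (fun s t => μ.1 (s, 1) (1, t) / μ.1 (1, t) (s, 1)) = (α : S → T → Γ)) :=
  ⟨yamazakiPairing_mem_pairings,
    fun μ ν => ⟨rfl, rfl, yamazakiPairing_mul μ.1 ν.1⟩,
    fun ν ξ α => ⟨yamazakiLift ν ξ α, resFst_yamazakiLift ν ξ α, resSnd_yamazakiLift ν ξ α,
      yamazakiPairing_yamazakiLift ν ξ α⟩⟩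
end

section
/- Let S, T be monoids and Γ an abelian group. If a 2-cocycle μ on S×T satisfies μ|_S = 1, μ|_T = 1, and μ((s,e),(e,t)) = μ((e,t),(s,e)) for all s ∈ S, t ∈ T, then μ is a coboundary; specifically μ = δh for h((s,t)) = 1/μ((s,e),(e,t)). -/
/-- If a 2-cocycle `μ` on `S × T` restricts trivially to `S` and to `T` and satisfies
`μ((s,1),(1,t)) = μ((1,t),(s,1))`, then `μ` is the coboundary of
`h(s,t) = μ((s,1),(1,t))⁻¹`. -/
theorem trivial_restrictions_coboundary {S T Γ : Type*} [Monoid S] [Monoid T] [CommGroup Γ]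
    (μ : S × T → S × T → Γ) (hμ : IsCocycle μ)
    (hS : ∀ s s' : S, μ (s, 1) (s', 1) = 1)
    (hT : ∀ t t' : T, μ ((1 : S), t) ((1 : S), t') = 1)
    (hsym : ∀ (s : S) (t : T), μ (s, 1) (1, t) = μ (1, t) (s, 1)) :
    (fun p : S × T => (μ (p.1, 1) (1, p.2))⁻¹) 1 = 1 ∧
    ∀ x y : S × T, μ x y =
      (μ (x.1, 1) (1, x.2))⁻¹ * (μ (y.1, 1) (1, y.2))⁻¹ /
        (μ ((x * y).1, 1) (1, (x * y).2))⁻¹ := by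
  obtain ⟨hc, h1, h2⟩ := hμ
  constructor
  · simp [h1, hS]
  · rintro ⟨s, t⟩ ⟨s', t'⟩
    have e1 := hc (s, 1) (s', 1) (1, t)
    have e2 := hc (s, 1) (1, t) (s', 1)
    have e3 := hc (s, t) (s', 1) (1, t')
    have e4 := hc (s * s', 1) (1, t) (1, t')
    simp only [Prod.mk_mul_mk, mul_one, one_mul, hS, hT, ← hsym] at e1 e2 e3 e4
    have h23 : μ (s * s', 1) (1, t) = μ (s, 1) (1, t) * μ (s, t) (s', 1) := by
      rw [← e1, e2]
    have key : μ (s, t) (s', t') * μ (s', 1) (1, t') * μ (s, 1) (1, t)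
        = μ (s * s', 1) (1, t * t') := by
      rw [e3, e4, h23]
      simp [mul_comm, mul_left_comm, mul_assoc]
    simp only [Prod.mk_mul_mk]
    rw [← key]
    simp [div_eq_mul_inv, mul_inv, mul_comm, mul_left_comm, mul_assoc]
end

section
/- (Yamazaki theorem for monoids) For monoids S, T and abelian group Γ, the Yamazaki map induces a group isomorphism H²(S×T, Γ) ≅ H²(S, Γ) × H²(T, Γ) × P(S,T,Γ), where P(S,T,Γ) is the group of bimultiplicative pairings. -/
section Aux

variable {S T Γ : Type*} [Monoid S] [Monoid T] [CommGroup Γ]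

/-- Antisymmetrization of a cocycle is multiplicative on commuting elements. -/
lemma cocycle_comm_pairing {M : Type*} [Monoid M] (f : M → M → Γ)
    (hc : ∀ x y z, f x (y * z) * f y z = f x y * f (x * y) z)
    (u u' v : M) (h1 : u * v = v * u) (h2 : u' * v = v * u') :
    f (u * u') v / f v (u * u') = f u v / f v u * (f u' v / f v u') := by
  have e1 := hc u u' v
  have e2 := hc u v u'
  have e3 := hc v u u'
  rw [← h2, h1] at e2
  have key : f u' v * f v (u * u') * f u v = f (u * u') v * f v u * f v u' := by
    apply mul_left_cancel (a := f u (u' * v) * (f u u' * f (v * u) u'))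
    calc f u (u' * v) * (f u u' * f (v * u) u') * (f u' v * f v (u * u') * f u v)
        = f u (u' * v) * f u' v * (f v (u * u') * f u u') * (f u v * f (v * u) u') := by
          simp only [mul_comm, mul_assoc, mul_left_comm]
      _ = f u u' * f (u * u') v * (f v u * f (v * u) u') * (f u (u' * v) * f v u') := by
          rw [e1, e3, ← e2]
      _ = f u (u' * v) * (f u u' * f (v * u) u') * (f (u * u') v * f v u * f v u') := by
          simp only [mul_comm, mul_assoc, mul_left_comm]
  rw [div_mul_div_comm, div_eq_div_iff_mul_eq_mul]
  calc f (u * u') v * (f v u * f v u') = f (u * u') v * f v u * f v u' := by rw [mul_assoc]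
    _ = f u' v * f v (u * u') * f u v := key.symm
    _ = f u v * f u' v * f v (u * u') := by simp only [mul_comm, mul_assoc, mul_left_comm]

/-- Decomposition identity for a cocycle on a product monoid. -/
lemma cocycle_decomp (f : S × T → S × T → Γ)
    (hc : ∀ x y z : S × T, f x (y * z) * f y z = f x y * f (x * y) z)
    (s s' : S) (t t' : T) :
    f (s, t) (s', t') * (f (s, 1) (1, t) * f (s', 1) (1, t) * f (s', 1) (1, t')) =
      f (s, 1) (s', 1) * f (1, t) (1, t') * f (1, t) (s', 1) * f (s * s', 1) (1, t * t') := by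
  have d1 := hc (s, t) (s', 1) (1, t')
  have d2 := hc (s, 1) (1, t) (s', 1)
  have d3 := hc (s, 1) (s', 1) (1, t)
  have d4 := hc (s * s', 1) (1, t) (1, t')
  simp only [Prod.mk_mul_mk, mul_one, one_mul] at d1 d2 d3 d4
  apply mul_left_cancel (a := f (s, t) (s', 1) * (f (s, 1) (s', t) * f (s * s', 1) (1, t)))
  calc f (s, t) (s', 1) * (f (s, 1) (s', t) * f (s * s', 1) (1, t)) *
        (f (s, t) (s', t') * (f (s, 1) (1, t) * f (s', 1) (1, t) * f (s', 1) (1, t')))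
      = f (s, t) (s', t') * f (s', 1) (1, t') *
          ((f (s, 1) (1, t) * f (s, t) (s', 1)) *
            ((f (s, 1) (s', t) * f (s', 1) (1, t)) * f (s * s', 1) (1, t))) := by
        simp only [mul_comm, mul_assoc, mul_left_comm]
    _ = f (s, t) (s', 1) * f (s * s', t) (1, t') *
          ((f (s, 1) (s', t) * f (1, t) (s', 1)) *
            ((f (s, 1) (s', 1) * f (s * s', 1) (1, t)) * f (s * s', 1) (1, t))) := by
        rw [d1, ← d2, d3]
    _ = f (s, t) (s', 1) * (f (s, 1) (s', t) * (f (s * s', 1) (1, t * t') * f (1, t) (1, t'))) *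
          (f (1, t) (s', 1) * (f (s, 1) (s', 1) * f (s * s', 1) (1, t))) := by
        rw [d4]; simp only [mul_comm, mul_assoc, mul_left_comm]
    _ = f (s, t) (s', 1) * (f (s, 1) (s', t) * f (s * s', 1) (1, t)) *
          (f (s, 1) (s', 1) * f (1, t) (1, t') * f (1, t) (s', 1) * f (s * s', 1) (1, t * t')) := by
        simp only [mul_comm, mul_assoc, mul_left_comm]

/-- The pairing associated to a cocycle on `S × T`. -/
def pairingOf (μ : Z2 (S × T) Γ) : Pairings S T Γ := by
  refine ⟨fun s t => μ.1 (s, 1) (1, t) / μ.1 (1, t) (s, 1), ?_, ?_⟩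
  · intro s s' t
    have := cocycle_comm_pairing μ.1 μ.2.1 (s, 1) (s', 1) (1, t) (by simp) (by simp)
    simpa using this
  · intro s t t'
    have := cocycle_comm_pairing μ.1 μ.2.1 (1, t) (1, t') (s, 1) (by simp) (by simp)
    simp only [Prod.mk_mul_mk, mul_one, one_mul] at this
    refine inv_injective ?_
    rw [mul_inv, inv_div, inv_div, inv_div]
    exact this

lemma pairing_one_left (β : Pairings S T Γ) (t : T) : β.1 1 t = 1 := by
  have := β.2.1 1 1 t
  rw [one_mul] at this
  exact (left_eq_mul.mp this)

lemma pairing_one_right (β : Pairings S T Γ) (s : S) : β.1 s 1 = 1 := by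
  have := β.2.2 s 1 1
  rw [one_mul] at this
  exact (left_eq_mul.mp this)

/-- The Yamazaki homomorphism on cocycle level. -/
def yamPhi : Z2 (S × T) Γ →* H2 S Γ × H2 T Γ × Pairings S T Γ where
  toFun μ := (QuotientGroup.mk (resFst μ), QuotientGroup.mk (resSnd μ), pairingOf μ)
  map_one' := by
    refine Prod.ext ?_ (Prod.ext ?_ ?_)
    · show QuotientGroup.mk (resFst 1) = 1
      have : resFst (1 : Z2 (S × T) Γ) = 1 := Subtype.ext rfl
      rw [this]; rfl
    · show QuotientGroup.mk (resSnd 1) = 1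
      have : resSnd (1 : Z2 (S × T) Γ) = 1 := Subtype.ext rfl
      rw [this]; rfl
    · show pairingOf 1 = 1
      refine Subtype.ext (funext fun s => funext fun t => ?_)
      show (1 : Γ) / 1 = 1
      simp
  map_mul' μ ν := by
    refine Prod.ext ?_ (Prod.ext ?_ ?_)
    · show QuotientGroup.mk (resFst (μ * ν)) = QuotientGroup.mk (resFst μ) * QuotientGroup.mk (resFst ν)
      have : resFst (μ * ν) = resFst μ * resFst ν := Subtype.ext rfl
      rw [this]; rfl
    · show QuotientGroup.mk (resSnd (μ * ν)) = QuotientGroup.mk (resSnd μ) * QuotientGroup.mk (resSnd ν)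
      have : resSnd (μ * ν) = resSnd μ * resSnd ν := Subtype.ext rfl
      rw [this]; rfl
    · show pairingOf (μ * ν) = pairingOf μ * pairingOf ν
      refine Subtype.ext (funext fun s => funext fun t => ?_)
      show (μ.1 (s,1) (1,t) * ν.1 (s,1) (1,t)) / (μ.1 (1,t) (s,1) * ν.1 (1,t) (s,1)) = _
      exact mul_div_mul_comm _ _ _ _

/-- Coboundaries map to the trivial element. -/
lemma yamPhi_coboundary (μ : Z2 (S × T) Γ) (hμ : IsCoboundary (μ : (S × T) → (S × T) → Γ)) :
    yamPhi μ = 1 := by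
  obtain ⟨h, h1, hh⟩ := hμ
  refine Prod.ext ?_ (Prod.ext ?_ ?_)
  · show QuotientGroup.mk (resFst μ) = 1
    apply (QuotientGroup.eq_one_iff _).mpr
    rw [Subgroup.mem_subgroupOf]
    exact ⟨fun s => h (s, 1), h1, fun s s' => by show μ.1 (s, 1) (s', 1) = _; simpa using hh (s, 1) (s', 1)⟩
  · show QuotientGroup.mk (resSnd μ) = 1
    apply (QuotientGroup.eq_one_iff _).mpr
    rw [Subgroup.mem_subgroupOf]
    exact ⟨fun t => h (1, t), h1, fun t t' => by show μ.1 (1, t) (1, t') = _; simpa using hh (1, t) (1, t')⟩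
  · show pairingOf μ = 1
    refine Subtype.ext (funext fun s => funext fun t => ?_)
    show μ.1 (s, 1) (1, t) / μ.1 (1, t) (s, 1) = 1
    rw [hh (s, 1) (1, t), hh (1, t) (s, 1)]
    simp [mul_comm]

/-- Kernel direction: trivial image means coboundary. -/
lemma coboundary_of_yamPhi_eq_one (μ : Z2 (S × T) Γ)
    (hS : IsCoboundary ((resFst μ : Z2 S Γ) : S → S → Γ))
    (hT : IsCoboundary ((resSnd μ : Z2 T Γ) : T → T → Γ))
    (hα : ∀ s t, μ.1 (s, 1) (1, t) = μ.1 (1, t) (s, 1)) :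
    IsCoboundary (μ : (S × T) → (S × T) → Γ) := by
  obtain ⟨p, hp1, hp⟩ := hS
  obtain ⟨q, hq1, hq⟩ := hT
  refine ⟨fun x => p x.1 * q x.2 / μ.1 (x.1, 1) (1, x.2), ?_, ?_⟩
  · show p 1 * q 1 / μ.1 (1, 1) (1, 1) = 1
    have : μ.1 (1, 1) (1, 1) = 1 := μ.2.2.2 (1, 1)
    rw [hp1, hq1, this]; simp
  · rintro ⟨s, t⟩ ⟨s', t'⟩
    have hd := cocycle_decomp μ.1 μ.2.1 s s' t t'
    rw [← hα s' t] at hd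
    -- from hd cancel the duplicated `μ.1 (s',1) (1,t)`
    have key : μ.1 (s, t) (s', t') * (μ.1 (s, 1) (1, t) * μ.1 (s', 1) (1, t')) =
        μ.1 (s, 1) (s', 1) * μ.1 (1, t) (1, t') * μ.1 (s * s', 1) (1, t * t') := by
      apply mul_right_cancel (b := μ.1 (s', 1) (1, t))
      calc μ.1 (s, t) (s', t') * (μ.1 (s, 1) (1, t) * μ.1 (s', 1) (1, t')) * μ.1 (s', 1) (1, t)
          = μ.1 (s, t) (s', t') *
              (μ.1 (s, 1) (1, t) * μ.1 (s', 1) (1, t) * μ.1 (s', 1) (1, t')) := by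
            simp only [mul_comm, mul_assoc, mul_left_comm]
        _ = μ.1 (s, 1) (s', 1) * μ.1 (1, t) (1, t') * μ.1 (s', 1) (1, t) *
              μ.1 (s * s', 1) (1, t * t') := hd
        _ = μ.1 (s, 1) (s', 1) * μ.1 (1, t) (1, t') * μ.1 (s * s', 1) (1, t * t') *
              μ.1 (s', 1) (1, t) := by
            simp only [mul_comm, mul_assoc, mul_left_comm]
    show μ.1 (s, t) (s', t') = _
    have hmul : ((s, t) : S × T) * (s', t') = (s * s', t * t') := rfl
    rw [hmul]
    rw [eq_div_iff_mul_eq']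
    show μ.1 (s, t) (s', t') * (p (s * s') * q (t * t') / μ.1 (s * s', 1) (1, t * t')) =
      p s * q t / μ.1 (s, 1) (1, t) * (p s' * q t' / μ.1 (s', 1) (1, t'))
    rw [div_mul_div_comm, ← mul_div_assoc, div_eq_div_iff_mul_eq_mul]
    have hps : μ.1 (s, 1) (s', 1) = p s * p s' / p (s * s') := hp s s'
    have hqt : μ.1 (1, t) (1, t') = q t * q t' / q (t * t') := hq t t'
    -- hps : μ.1 (s,1) (s',1) = p s * p s' / p (s*s'), similarly hqt
    calc μ.1 (s, t) (s', t') * (p (s * s') * q (t * t')) *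
          (μ.1 (s, 1) (1, t) * μ.1 (s', 1) (1, t'))
        = μ.1 (s, t) (s', t') * (μ.1 (s, 1) (1, t) * μ.1 (s', 1) (1, t')) *
            (p (s * s') * q (t * t')) := by
          simp only [mul_comm, mul_assoc, mul_left_comm]
      _ = μ.1 (s, 1) (s', 1) * μ.1 (1, t) (1, t') * μ.1 (s * s', 1) (1, t * t') *
            (p (s * s') * q (t * t')) := by rw [key]
      _ = (μ.1 (s, 1) (s', 1) * p (s * s')) * (μ.1 (1, t) (1, t') * q (t * t')) *
            μ.1 (s * s', 1) (1, t * t') := by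
          simp only [mul_comm, mul_assoc, mul_left_comm]
      _ = (p s * p s') * (q t * q t') * μ.1 (s * s', 1) (1, t * t') := by
          rw [hps, hqt, div_mul_cancel, div_mul_cancel]
      _ = p s * q t * (p s' * q t') * μ.1 (s * s', 1) (1, t * t') := by
          simp only [mul_comm, mul_assoc, mul_left_comm]

/-- The product cocycle built from cocycles on the factors and a pairing. -/
def prodCocycle (g : Z2 S Γ) (k : Z2 T Γ) (β : Pairings S T Γ) : Z2 (S × T) Γ := by
  refine ⟨fun x y => g.1 x.1 y.1 * k.1 x.2 y.2 * (β.1 y.1 x.2)⁻¹, ?_, ?_, ?_⟩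
  · rintro ⟨s1, t1⟩ ⟨s2, t2⟩ ⟨s3, t3⟩
    show g.1 s1 (s2 * s3) * k.1 t1 (t2 * t3) * (β.1 (s2 * s3) t1)⁻¹ *
        (g.1 s2 s3 * k.1 t2 t3 * (β.1 s3 t2)⁻¹) =
      g.1 s1 s2 * k.1 t1 t2 * (β.1 s2 t1)⁻¹ *
        (g.1 (s1 * s2) s3 * k.1 (t1 * t2) t3 * (β.1 s3 (t1 * t2))⁻¹)
    rw [β.2.1 s2 s3 t1, β.2.2 s3 t1 t2, mul_inv, mul_inv]
    calc g.1 s1 (s2 * s3) * k.1 t1 (t2 * t3) * ((β.1 s2 t1)⁻¹ * (β.1 s3 t1)⁻¹) *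
          (g.1 s2 s3 * k.1 t2 t3 * (β.1 s3 t2)⁻¹)
        = (g.1 s1 (s2 * s3) * g.1 s2 s3) * (k.1 t1 (t2 * t3) * k.1 t2 t3) *
            ((β.1 s2 t1)⁻¹ * ((β.1 s3 t1)⁻¹ * (β.1 s3 t2)⁻¹)) := by
          simp only [mul_comm, mul_assoc, mul_left_comm]
      _ = (g.1 s1 s2 * g.1 (s1 * s2) s3) * (k.1 t1 t2 * k.1 (t1 * t2) t3) *
            ((β.1 s2 t1)⁻¹ * ((β.1 s3 t1)⁻¹ * (β.1 s3 t2)⁻¹)) := by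
          rw [g.2.1 s1 s2 s3, k.2.1 t1 t2 t3]
      _ = g.1 s1 s2 * k.1 t1 t2 * (β.1 s2 t1)⁻¹ *
            (g.1 (s1 * s2) s3 * k.1 (t1 * t2) t3 * ((β.1 s3 t1)⁻¹ * (β.1 s3 t2)⁻¹)) := by
          simp only [mul_comm, mul_assoc, mul_left_comm]
  · rintro ⟨s, t⟩
    show g.1 s 1 * k.1 t 1 * (β.1 1 t)⁻¹ = 1
    rw [g.2.2.1 s, k.2.2.1 t, pairing_one_left β t]
    simp
  · rintro ⟨s, t⟩
    show g.1 1 s * k.1 1 t * (β.1 s 1)⁻¹ = 1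
    rw [g.2.2.2 s, k.2.2.2 t, pairing_one_right β s]
    simp

end Aux

/-- **Yamazaki theorem for monoids.** For monoids `S`, `T` and an abelian group `Γ`, the
Yamazaki map induces a group isomorphism
`H²(S×T, Γ) ≅ H²(S, Γ) × H²(T, Γ) × P(S,T,Γ)`; on the class of a cocycle `μ` it is given by
`[μ] ↦ ([μ|_S], [μ|_T], α_μ)` with `α_μ(s,t) = μ((s,1),(1,t))/μ((1,t),(s,1))`. -/
theorem yamazaki_theorem (S T Γ : Type*) [Monoid S] [Monoid T] [CommGroup Γ] :
    ∃ e : H2 (S × T) Γ ≃* (H2 S Γ × H2 T Γ × Pairings S T Γ),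
      ∀ μ : Z2 (S × T) Γ,
        (e (QuotientGroup.mk μ)).1 = QuotientGroup.mk (resFst μ) ∧
        (e (QuotientGroup.mk μ)).2.1 = QuotientGroup.mk (resSnd μ) ∧
        ((e (QuotientGroup.mk μ)).2.2 : S → T → Γ) =
          fun s t => μ.1 (s, 1) (1, t) / μ.1 (1, t) (s, 1) := by
  have hker : ∀ μ ∈ (B2 (S × T) Γ).subgroupOf (Z2 (S × T) Γ),
      (yamPhi : Z2 (S × T) Γ →* H2 S Γ × H2 T Γ × Pairings S T Γ) μ = 1 :=
    fun μ hμ => yamPhi_coboundary μ (Subgroup.mem_subgroupOf.mp hμ)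
  let e0 : H2 (S × T) Γ →* H2 S Γ × H2 T Γ × Pairings S T Γ :=
    QuotientGroup.lift _ yamPhi hker
  have he0 : ∀ μ : Z2 (S × T) Γ, e0 (QuotientGroup.mk μ) = yamPhi μ := fun μ => rfl
  have hinj : Function.Injective e0 := by
    rw [injective_iff_map_eq_one]
    intro x hx
    obtain ⟨μ, rfl⟩ := QuotientGroup.mk_surjective x
    rw [he0] at hx
    have hS : (QuotientGroup.mk (resFst μ) : H2 S Γ) = 1 := congrArg Prod.fst hx
    have hT : (QuotientGroup.mk (resSnd μ) : H2 T Γ) = 1 := congrArg (Prod.fst ∘ Prod.snd) hx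
    have hP : pairingOf μ = 1 := congrArg (Prod.snd ∘ Prod.snd) hx
    rw [QuotientGroup.eq_one_iff, Subgroup.mem_subgroupOf] at hS hT
    apply (QuotientGroup.eq_one_iff _).mpr
    rw [Subgroup.mem_subgroupOf]
    refine Subgroup.mem_subgroupOf.mp ?_
    refine Subgroup.mem_subgroupOf.mpr ?_
    refine coboundary_of_yamPhi_eq_one μ hS hT fun s t => ?_
    have := congrFun (congrFun (congrArg Subtype.val hP) s) t
    have h1 : μ.1 (s, 1) (1, t) / μ.1 (1, t) (s, 1) = 1 := this
    exact div_eq_one.mp h1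
  have hsurj : Function.Surjective e0 := by
    rintro ⟨a, b, β⟩
    obtain ⟨g, rfl⟩ := QuotientGroup.mk_surjective a
    obtain ⟨k, rfl⟩ := QuotientGroup.mk_surjective b
    refine ⟨QuotientGroup.mk (prodCocycle g k β), ?_⟩
    rw [he0]
    refine Prod.ext ?_ (Prod.ext ?_ ?_)
    · show (QuotientGroup.mk (resFst (prodCocycle g k β)) : H2 S Γ) = QuotientGroup.mk g
      congr 1
      refine Subtype.ext (funext fun s => funext fun s' => ?_)
      show g.1 s s' * k.1 1 1 * (β.1 s' 1)⁻¹ = g.1 s s'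
      rw [k.2.2.1 1, pairing_one_right β s']
      simp
    · show (QuotientGroup.mk (resSnd (prodCocycle g k β)) : H2 T Γ) = QuotientGroup.mk k
      congr 1
      refine Subtype.ext (funext fun t => funext fun t' => ?_)
      show g.1 1 1 * k.1 t t' * (β.1 1 t)⁻¹ = k.1 t t'
      rw [g.2.2.1 1, pairing_one_left β t]
      simp
    · show pairingOf (prodCocycle g k β) = β
      refine Subtype.ext (funext fun s => funext fun t => ?_)
      show (g.1 s 1 * k.1 1 t * (β.1 1 1)⁻¹) / (g.1 1 s * k.1 t 1 * (β.1 s t)⁻¹) = β.1 s t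
      rw [g.2.2.1 s, k.2.2.2 t, g.2.2.2 s, k.2.2.1 t, pairing_one_left β 1]
      simp
  exact ⟨MulEquiv.ofBijective e0 ⟨hinj, hsurj⟩, fun μ => ⟨rfl, rfl, rfl⟩⟩
end

section
/- A 2-cocycle μ on S×T with values in Γ is cohomologous to a direct product ν×ξ of a cocycle ν on S and a cocycle ξ on T if and only if α_μ(s,t) = μ((s,e),(e,t))/μ((e,t),(s,e)) equals 1 for all s ∈ S, t ∈ T. -/
/-- Abstract abelian-group computation used in the backward direction. -/
lemma helperA {A : Type*} [AddCommGroup A] (a b c d r q p g ν : A)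
    (key : a + b + (g + c) + (r + d) = c + d + (ν + r) + (p + q)) :
    a = ν + q + (-g + -b - -p) := by
  have h2 : a = c + d + (ν + r) + (p + q) - (b + (g + c) + (r + d)) := by
    rw [← key]; abel
  rw [h2]; abel

/-- Multiplicative version, via `Additive`. -/
lemma helperM {G : Type*} [CommGroup G] (a b c d r q p g ν : G)
    (key : a * b * (g * c) * (r * d) = c * d * (ν * r) * (p * q)) :
    a = ν * q * (g⁻¹ * b⁻¹ / p⁻¹) :=
  helperA (A := Additive G) a b c d r q p g ν key

/-- A 2-cocycle `μ` on `S × T` is cohomologous to a direct product `ν × ξ` of a cocycle on `S`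
and a cocycle on `T` (i.e. `μ` is factorizable) if and only if
`α_μ(s,t) = μ((s,1),(1,t))/μ((1,t),(s,1))` is identically `1`. -/
theorem factorizable_iff_pairing_trivial {S T Γ : Type*} [Monoid S] [Monoid T] [CommGroup Γ]
    (μ : S × T → S × T → Γ) (hμ : IsCocycle μ) :
    (∃ (ν : S → S → Γ) (ξ : T → T → Γ) (h : S × T → Γ),
        IsCocycle ν ∧ IsCocycle ξ ∧ h 1 = 1 ∧
        ∀ p p' : S × T, μ p p' = ν p.1 p'.1 * ξ p.2 p'.2 * (h p * h p' / h (p * p'))) ↔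
      ∀ (s : S) (t : T), μ (s, 1) (1, t) / μ (1, t) (s, 1) = 1 := by
  obtain ⟨hc, hr, hl⟩ := hμ
  constructor
  · rintro ⟨ν, ξ, h, ⟨-, hνr, hνl⟩, ⟨-, hξr, hξl⟩, -, hfac⟩ s t
    have h1 := hfac (s, 1) (1, t)
    have h2 := hfac (1, t) (s, 1)
    simp only [Prod.mk_mul_mk, one_mul, mul_one] at h1 h2
    rw [h1, h2, hνr, hνl, hξr, hξl, mul_comm (h (s, 1)) (h (1, t))]
    simp
  · intro hα
    refine ⟨fun s s' => μ (s, 1) (s', 1), fun t t' => μ (1, t) (1, t'),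
      fun p => (μ (p.1, 1) (1, p.2))⁻¹, ⟨?_, ?_, ?_⟩, ⟨?_, ?_, ?_⟩, ?_, ?_⟩
    · intro x y z
      simpa using hc (x, 1) (y, 1) (z, 1)
    · intro x
      exact hr (x, (1 : T))
    · intro x
      exact hl (x, (1 : T))
    · intro x y z
      simpa using hc ((1 : S), x) ((1 : S), y) ((1 : S), z)
    · intro x
      exact hr ((1 : S), x)
    · intro x
      exact hl ((1 : S), x)
    · exact inv_eq_one.mpr (hl 1)
    · rintro ⟨s, t⟩ ⟨s', t'⟩
      simp only [Prod.mk_mul_mk]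
      have A1 : μ (1, t) (s', 1) = μ (s', 1) (1, t) :=
        (div_eq_one.mp (hα s' t)).symm
      have C1 := hc (s, t) (s', 1) (1, t')
      have C2 := hc (s, 1) (1, t) (s', 1)
      have C3 := hc (s, 1) (s', 1) (1, t)
      have C4 := hc (s * s', 1) (1, t) (1, t')
      simp only [Prod.mk_mul_mk, one_mul, mul_one] at C1 C2 C3 C4
      rw [A1] at C2
      -- hgc : g * c = ν * r
      have hgc : μ (s, 1) (1, t) * μ (s, t) (s', 1)
          = μ (s, 1) (s', 1) * μ (s * s', 1) (1, t) := C2.symm.trans C3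
      have key : μ (s, t) (s', t') * μ (s', 1) (1, t')
            * (μ (s, 1) (1, t) * μ (s, t) (s', 1))
            * (μ (s * s', 1) (1, t) * μ (s * s', t) (1, t'))
          = μ (s, t) (s', 1) * μ (s * s', t) (1, t')
            * (μ (s, 1) (s', 1) * μ (s * s', 1) (1, t))
            * (μ (s * s', 1) (1, t * t') * μ (1, t) (1, t')) := by
        rw [C1, hgc, C4]
      exact helperM _ _ _ _ _ _ _ _ _ key
end

section
/- Every symmetric (abelian) 2-cocycle on ℕⁿ with values in an abelian group Γ is a coboundary, i.e., H²_abel(ℕⁿ, Γ) is trivial for all n ≥ 1. -/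
/-- A 2-cocycle on the free commutative monoid `ℕⁿ` (written additively) with values in an
abelian group `Γ` (written multiplicatively, trivial action). -/
def IsCocycleNatPow {n : ℕ} {Γ : Type*} [CommGroup Γ]
    (μ : (Fin n → ℕ) → (Fin n → ℕ) → Γ) : Prop :=
  (∀ x y z, μ x (y + z) * μ y z = μ x y * μ (x + y) z) ∧
    (∀ x, μ x 0 = 1) ∧ (∀ x, μ 0 x = 1)

/-- The extension of `ℕⁿ` by `Γ` determined by a cocycle. -/
structure ExtC (n : ℕ) (Γ : Type*) where
  a : Γ
  x : Fin n → ℕ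

def extCommMonoid {n : ℕ} {Γ : Type*} [CommGroup Γ]
    (μ : (Fin n → ℕ) → (Fin n → ℕ) → Γ) (hμ : IsCocycleNatPow μ)
    (hsym : ∀ x y, μ x y = μ y x) : CommMonoid (ExtC n Γ) where
  mul p q := ⟨p.a * q.a * μ p.x q.x, p.x + q.x⟩
  one := ⟨1, 0⟩
  mul_assoc p q r := by
    obtain ⟨hc, h0, h0'⟩ := hμ
    show ExtC.mk _ _ = ExtC.mk _ _
    congr 1
    · have h := hc p.x q.x r.x
      calc p.a * q.a * μ p.x q.x * r.a * μ (p.x + q.x) r.x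
          = p.a * q.a * r.a * (μ p.x q.x * μ (p.x + q.x) r.x) := by
            rw [mul_right_comm (p.a * q.a) (μ p.x q.x) r.a, mul_assoc]
        _ = p.a * q.a * r.a * (μ p.x (q.x + r.x) * μ q.x r.x) := by rw [← h]
        _ = p.a * (q.a * r.a * μ q.x r.x) * μ p.x (q.x + r.x) := by
            rw [mul_comm (μ p.x (q.x + r.x)) (μ q.x r.x), ← mul_assoc, ← mul_assoc,
              mul_assoc p.a q.a r.a]
    · exact add_assoc _ _ _
  one_mul p := by
    cases p with
    | mk a x =>
      show ExtC.mk (1 * a * μ 0 x) (0 + x) = ExtC.mk a x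
      rw [hμ.2.2, one_mul, mul_one, zero_add]
  mul_one p := by
    cases p with
    | mk a x =>
      show ExtC.mk (a * 1 * μ x 0) (x + 0) = ExtC.mk a x
      rw [hμ.2.1, mul_one, mul_one, add_zero]
  mul_comm p q := by
    show ExtC.mk _ _ = ExtC.mk _ _
    congr 1
    · rw [hsym, mul_comm p.a q.a]
    · exact add_comm _ _

/-- Every symmetric (abelian) 2-cocycle on `ℕⁿ` is a coboundary: `H²_abel(ℕⁿ, Γ)` is trivial. -/
theorem symmetric_cocycle_is_coboundary {n : ℕ} (hn : 1 ≤ n) {Γ : Type*} [CommGroup Γ]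
    (μ : (Fin n → ℕ) → (Fin n → ℕ) → Γ) (hμ : IsCocycleNatPow μ)
    (hsym : ∀ x y, μ x y = μ y x) :
    ∃ h : (Fin n → ℕ) → Γ, h 0 = 1 ∧ ∀ x y, μ x y = h x * h y / h (x + y) := by
  letI : CommMonoid (ExtC n Γ) := extCommMonoid μ hμ hsym
  -- section of the projection, as a product over generators
  set S : (Fin n → ℕ) → ExtC n Γ :=
    fun x => ∏ i, (ExtC.mk (1 : Γ) (Pi.single i 1)) ^ (x i) with hS
  -- projection to ℕⁿ is a monoid hom
  let φ : ExtC n Γ →* Multiplicative (Fin n → ℕ) :=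
    { toFun := fun p => Multiplicative.ofAdd p.x
      map_one' := rfl
      map_mul' := fun p q => rfl }
  have hSx : ∀ x, (S x).x = x := by
    intro x
    have : φ (S x) = Multiplicative.ofAdd x := by
      rw [hS]
      rw [map_prod]
      have : ∀ i, φ ((ExtC.mk (1 : Γ) (Pi.single i 1)) ^ (x i))
          = Multiplicative.ofAdd (Pi.single i (x i)) := by
        intro i
        rw [map_pow]
        show Multiplicative.ofAdd (Pi.single i 1) ^ (x i) = _
        rw [← ofAdd_nsmul]
        congr 1
        rw [← Pi.single_smul, smul_eq_mul, mul_one]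
      simp_rw [this]
      rw [← ofAdd_sum]
      congr 1
      exact Finset.univ_sum_single x
    exact congrArg Multiplicative.toAdd this
  have hhom : ∀ x y, S (x + y) = S x * S y := by
    intro x y
    rw [hS]
    simp only [Pi.add_apply, pow_add]
    exact Finset.prod_mul_distrib
  refine ⟨fun x => ((S x).a)⁻¹, ?_, ?_⟩
  · have : S 0 = 1 := by
      rw [hS]; simp
    show (S 0).a⁻¹ = 1
    rw [this]
    exact inv_one
  · intro x y
    have h1 := hhom x y
    have h2 : (S (x + y)).a = (S x).a * (S y).a * μ (S x).x (S y).x := by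
      rw [h1]; rfl
    rw [hSx, hSx] at h2
    rw [div_eq_mul_inv]
    show μ x y = (S x).a⁻¹ * (S y).a⁻¹ * ((S (x + y)).a⁻¹)⁻¹
    rw [h2, inv_inv, mul_comm (S x).a (S y).a, mul_assoc (S y).a (S x).a (μ x y),
      mul_assoc ((S x).a)⁻¹ ((S y).a)⁻¹, inv_mul_cancel_left, inv_mul_cancel_left]
end

section
/- For the free commutative monoid ℕⁿ and any abelian group Γ, the antisymmetrization map β: H²(ℕⁿ, Γ) → P_{a.s.}(ℕⁿ, Γ), [μ] ↦ ((x,y) ↦ μ(x,y)/μ(y,x)), is a group isomorphism. -/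
/-- The group of antisymmetric bimultiplicative pairings `P_{a.s.}(ℕⁿ, Γ)`, with `ℕⁿ`
realized as `Multiplicative (Fin n → ℕ)`. -/
def PasN (n : ℕ) (Γ : Type*) [CommGroup Γ] :
    Subgroup (Multiplicative (Fin n → ℕ) → Multiplicative (Fin n → ℕ) → Γ) where
  carrier := {b | (∀ x x' y, b (x * x') y = b x y * b x' y) ∧
    (∀ x y y', b x (y * y') = b x y * b x y') ∧
    (∀ x, b x x = 1) ∧ (∀ x y, b x y * b y x = 1)}
  mul_mem' := by
    rintro b c ⟨b1, b2, b3, b4⟩ ⟨c1, c2, c3, c4⟩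
    refine ⟨fun x x' y => ?_, fun x y y' => ?_, fun x => ?_, fun x y => ?_⟩ <;>
      simp only [Pi.mul_apply, b1, b2, b3, c1, c2, c3, one_mul]
    · rw [mul_mul_mul_comm]
    · rw [mul_mul_mul_comm]
    · rw [mul_mul_mul_comm, b4, c4, one_mul]
  one_mem' := ⟨fun _ _ _ => by simp, fun _ _ _ => by simp, fun _ => rfl, fun _ _ => by simp⟩
  inv_mem' := by
    rintro b ⟨b1, b2, b3, b4⟩
    refine ⟨fun x x' y => ?_, fun x y y' => ?_, fun x => ?_, fun x y => ?_⟩ <;>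
      simp only [Pi.inv_apply, b1, b2, b3, mul_inv, inv_one]
    rw [← mul_inv, b4, inv_one]

/-! ### Auxiliary material for the main theorem -/

section Aux

open Multiplicative

/-- Abbreviation for the free commutative monoid `ℕⁿ`. -/
abbrev Mn (n : ℕ) := Multiplicative (Fin n → ℕ)

/-- The `i`-th canonical generator of `ℕⁿ`. -/
def gen (n : ℕ) (i : Fin n) : Mn n := Multiplicative.ofAdd (Pi.single i 1)

lemma gen_pow {n : ℕ} (i : Fin n) (k : ℕ) :
    gen n i ^ k = Multiplicative.ofAdd (Pi.single i k) := by
  show Multiplicative.ofAdd (Pi.single i 1) ^ k = _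
  rw [← ofAdd_nsmul]
  congr 1
  simp [← Pi.single_smul]

lemma decomp {n : ℕ} (x : Mn n) :
    x = ∏ i, gen n i ^ (Multiplicative.toAdd x i) := by
  simp only [gen_pow]
  rw [← ofAdd_sum, Finset.univ_sum_single]
  rfl

lemma bimul_one_left {M Γ : Type*} [Monoid M] [CommGroup Γ] (b : M → M → Γ)
    (hb : ∀ x x' y, b (x * x') y = b x y * b x' y) (y : M) : b 1 y = 1 := by
  have := hb 1 1 y
  rw [mul_one] at this
  exact (left_eq_mul.mp this)

lemma bimul_one_right {M Γ : Type*} [Monoid M] [CommGroup Γ] (b : M → M → Γ)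
    (hb : ∀ x y y', b x (y * y') = b x y * b x y') (x : M) : b x 1 = 1 := by
  have := hb x 1 1
  rw [mul_one] at this
  exact (left_eq_mul.mp this)

/-- Any bimultiplicative map on `ℕⁿ` is determined by its values on generators. -/
lemma bimul_expand {n : ℕ} {Γ : Type*} [CommGroup Γ] (b : Mn n → Mn n → Γ)
    (hb1 : ∀ x x' y, b (x * x') y = b x y * b x' y)
    (hb2 : ∀ x y y', b x (y * y') = b x y * b x y') (x y : Mn n) :
    b x y = ∏ i, ∏ j, (b (gen n i) (gen n j)) ^
      (Multiplicative.toAdd x i * Multiplicative.toAdd y j) := by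
  let B : Mn n → Mn n →* Γ := fun x =>
    ⟨⟨fun y => b x y, bimul_one_right b hb2 x⟩, fun y y' => hb2 x y y'⟩
  have key : ∀ x y : Mn n, b x y = ∏ j, b x (gen n j) ^ Multiplicative.toAdd y j := by
    intro x y
    conv_lhs => rw [decomp y]
    exact (map_prod (B x) _ _).trans (by simp [map_pow, B])
  let A : Mn n →* Γ :=
    ⟨⟨fun x => ∏ j, b x (gen n j) ^ Multiplicative.toAdd y j, by
        simp [bimul_one_left b hb1]⟩, by
      intro x x'
      simp only
      rw [← Finset.prod_mul_distrib]
      refine Finset.prod_congr rfl fun j _ => ?_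
      rw [← mul_pow]
      congr 1
      exact hb1 x x' (gen n j)⟩
  rw [key x y]
  have hA : (∏ j, b x (gen n j) ^ Multiplicative.toAdd y j) = A x := rfl
  rw [hA]
  conv_lhs => rw [decomp x]
  refine (map_prod A _ _).trans ?_
  refine Finset.prod_congr rfl fun i _ => ?_
  rw [map_pow]
  show (∏ j, b (gen n i) (gen n j) ^ Multiplicative.toAdd y j) ^ _ = _
  rw [← Finset.prod_pow]
  refine Finset.prod_congr rfl fun j _ => ?_
  rw [← pow_mul, mul_comm (Multiplicative.toAdd y j)]

/-- Any bimultiplicative map is a 2-cocycle. -/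
lemma bimul_isCocycle {M Γ : Type*} [Monoid M] [CommGroup Γ] (c : M → M → Γ)
    (h1 : ∀ x x' y, c (x * x') y = c x y * c x' y)
    (h2 : ∀ x y y', c x (y * y') = c x y * c x y') : IsCocycle c := by
  refine ⟨fun x y z => ?_, bimul_one_right c h2, bimul_one_left c h1⟩
  rw [h2 x y z, h1 x y z, mul_assoc]

/-- Antisymmetrization of a cocycle over a commutative monoid is multiplicative in the
first variable. -/
lemma beta_mul_left {M Γ : Type*} [CommMonoid M] [CommGroup Γ] (μ : M → M → Γ)
    (hc : IsCocycle μ) (x y z : M) :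
    μ (x * y) z / μ z (x * y) = (μ x z / μ z x) * (μ y z / μ z y) := by
  have hA := hc.1 x y z
  have hB := hc.1 z x y
  have hC := hc.1 x z y
  rw [mul_comm z y] at hC
  rw [mul_comm z x] at hB
  have e1 : μ (x * y) z = μ x (y * z) * μ y z / μ x y :=
    eq_div_of_mul_eq'' (by rw [hA])
  have e2 : μ z (x * y) = μ z x * μ (x * z) y / μ x y :=
    eq_div_of_mul_eq' (by rw [hB])
  have e3 : μ x (y * z) = μ x z * μ (x * z) y / μ z y :=
    eq_div_of_mul_eq' (by rw [mul_comm y z] at hC ⊢; exact hC)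
  rw [e1, e2, e3]
  apply Additive.ofMul.injective
  simp only [ofMul_mul, ofMul_div]
  abel

section Surj

variable {n : ℕ} {Γ : Type*} [CommGroup Γ] (b : Mn n → Mn n → Γ)

/-- The canonical bicharacter attached to an antisymmetric pairing on `ℕⁿ`. -/
def cOf : Mn n → Mn n → Γ := fun x y => ∏ i, ∏ j,
  (if i < j then b (gen n i) (gen n j) else 1) ^
    (Multiplicative.toAdd x i * Multiplicative.toAdd y j)

lemma cOf_mul_left (x x' y : Mn n) : cOf b (x * x') y = cOf b x y * cOf b x' y := by
  simp only [cOf, toAdd_mul, Pi.add_apply, add_mul, pow_add, Finset.prod_mul_distrib]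

lemma cOf_mul_right (x y y' : Mn n) : cOf b x (y * y') = cOf b x y * cOf b x y' := by
  simp only [cOf, toAdd_mul, Pi.add_apply, mul_add, pow_add, Finset.prod_mul_distrib]

lemma cOf_div (hb3 : ∀ x, b x x = 1) (hb4 : ∀ x y, b x y * b y x = 1)
    (hb1 : ∀ x x' y, b (x * x') y = b x y * b x' y)
    (hb2 : ∀ x y y', b x (y * y') = b x y * b x y') (x y : Mn n) :
    cOf b x y / cOf b y x = b x y := by
  rw [bimul_expand b hb1 hb2 x y]
  have hsplit : ∀ i j : Fin n,
      b (gen n i) (gen n j) ^ (Multiplicative.toAdd x i * Multiplicative.toAdd y j) =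
      (if i < j then b (gen n i) (gen n j) else 1) ^
        (Multiplicative.toAdd x i * Multiplicative.toAdd y j) *
      (if j < i then b (gen n i) (gen n j) else 1) ^
        (Multiplicative.toAdd x i * Multiplicative.toAdd y j) := by
    intro i j
    rcases lt_trichotomy i j with h | h | h
    · simp [h, not_lt_of_gt h]
    · subst h
      simp [lt_irrefl, hb3]
    · simp [h, not_lt_of_gt h]
  simp only [hsplit, Finset.prod_mul_distrib]
  have hDC : (∏ i : Fin n, ∏ j : Fin n,
        (if j < i then b (gen n i) (gen n j) else 1) ^
          (Multiplicative.toAdd x i * Multiplicative.toAdd y j)) *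
      (∏ i : Fin n, ∏ j : Fin n,
        (if i < j then b (gen n i) (gen n j) else 1) ^
          (Multiplicative.toAdd y i * Multiplicative.toAdd x j)) = 1 := by
    rw [mul_comm]
    rw [Finset.prod_comm (f := fun i j => (if i < j then b (gen n i) (gen n j) else 1) ^
          (Multiplicative.toAdd y i * Multiplicative.toAdd x j))]
    rw [← Finset.prod_mul_distrib]
    refine Finset.prod_eq_one fun a _ => ?_
    rw [← Finset.prod_mul_distrib]
    refine Finset.prod_eq_one fun c _ => ?_
    by_cases h : c < a
    · rw [if_pos h, if_pos h, mul_comm (Multiplicative.toAdd y c), ← mul_pow, hb4]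
      exact one_pow _
    · rw [if_neg h, if_neg h, one_pow, one_pow, one_mul]
  unfold cOf
  rw [div_eq_iff_eq_mul, mul_assoc, hDC, mul_one]

end Surj

end Aux
section Cobound

/-- Type synonym for the extension `M ×_μ Γ`. -/
def ExtT (M Γ : Type*) := M × Γ

/-- Every symmetric 2-cocycle on `ℕⁿ` is a coboundary. -/
lemma symm_isCoboundary {n : ℕ} {Γ : Type*} [CommGroup Γ] (μ : Mn n → Mn n → Γ)
    (hc : IsCocycle μ) (hsym : ∀ x y, μ x y = μ y x) : IsCoboundary μ := by
  obtain ⟨hco, hr, hl⟩ := hc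
  letI : CommMonoid (ExtT (Mn n) Γ) :=
  { mul := fun p q => (p.1 * q.1, p.2 * q.2 * μ p.1 q.1)
    one := ((1 : Mn n), (1 : Γ))
    mul_assoc := by
      rintro ⟨a, s⟩ ⟨b, t⟩ ⟨c, u⟩
      refine Prod.ext (mul_assoc a b c) ?_
      show s * t * μ a b * u * μ (a * b) c = s * (t * u * μ b c) * μ a (b * c)
      rw [show μ a (b * c) = μ a b * μ (a * b) c / μ b c from
        eq_div_of_mul_eq' (hco a b c)]
      apply Additive.ofMul.injective
      simp only [ofMul_mul, ofMul_div]
      abel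
    one_mul := by
      rintro ⟨a, s⟩
      refine Prod.ext (one_mul a) ?_
      show 1 * s * μ 1 a = s
      rw [hl, one_mul, mul_one]
    mul_one := by
      rintro ⟨a, s⟩
      refine Prod.ext (mul_one a) ?_
      show s * 1 * μ a 1 = s
      rw [hr, mul_one, mul_one]
    mul_comm := by
      rintro ⟨a, s⟩ ⟨b, t⟩
      refine Prod.ext (mul_comm a b) ?_
      show s * t * μ a b = t * s * μ b a
      rw [hsym, mul_comm s t] }
  let eE : Fin n → ExtT (Mn n) Γ := fun i => (gen n i, 1)
  let s : Mn n → ExtT (Mn n) Γ := fun x => ∏ i, eE i ^ (Multiplicative.toAdd x i)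
  let fstHom : ExtT (Mn n) Γ →* Mn n := ⟨⟨Prod.fst, rfl⟩, fun p q => rfl⟩
  have hfst : ∀ x, (s x).1 = x := by
    intro x
    have h1 : (s x).1 = fstHom (s x) := rfl
    rw [h1, map_prod]
    conv_rhs => rw [decomp x]
    refine Finset.prod_congr rfl fun i _ => ?_
    rw [map_pow]
    rfl
  have hsmul : ∀ x y, s (x * y) = s x * s y := by
    intro x y
    show ∏ i, eE i ^ (Multiplicative.toAdd (x * y) i) = _
    simp only [toAdd_mul, Pi.add_apply, pow_add, Finset.prod_mul_distrib]
    rfl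
  have hone : s 1 = 1 := by
    show ∏ i, eE i ^ (Multiplicative.toAdd (1 : Mn n) i) = 1
    simp [toAdd_one]
  refine ⟨fun x => ((s x).2)⁻¹, ?_, fun x y => ?_⟩
  · show ((s 1).2)⁻¹ = 1
    rw [hone]
    show (1 : Γ)⁻¹ = 1
    exact inv_one
  have key : (s (x * y)).2 = (s x).2 * (s y).2 * μ x y := by
    rw [hsmul x y]
    show (s x).2 * (s y).2 * μ (s x).1 (s y).1 = _
    rw [hfst, hfst]
  show μ x y = ((s x).2)⁻¹ * ((s y).2)⁻¹ / ((s (x * y)).2)⁻¹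
  rw [show ((s (x * y)).2)⁻¹ = ((s x).2 * (s y).2 * μ x y)⁻¹ by rw [key]]
  apply Additive.ofMul.injective
  simp only [ofMul_mul, ofMul_div, ofMul_inv]
  abel

end Cobound
section Assemble

variable (n : ℕ) (Γ : Type*) [CommGroup Γ]

/-- The antisymmetrization homomorphism on cocycles. -/
def betaHom : Z2 (Mn n) Γ →* PasN n Γ where
  toFun μ := ⟨fun x y => μ.1 x y / μ.1 y x, by
    have hc : IsCocycle μ.1 := μ.2
    refine ⟨fun x x' y => beta_mul_left μ.1 hc x x' y, fun x y y' => ?_, fun x => div_self' _,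
      fun x y => ?_⟩
    · show μ.1 x (y * y') / μ.1 (y * y') x = (μ.1 x y / μ.1 y x) * (μ.1 x y' / μ.1 y' x)
      have h := beta_mul_left μ.1 hc y y' x
      rw [← inv_div (μ.1 (y * y') x), h, mul_inv, inv_div, inv_div]
    · show μ.1 x y / μ.1 y x * (μ.1 y x / μ.1 x y) = 1
      rw [div_mul_div_comm, mul_comm (μ.1 x y)]
      exact div_self' _⟩
  map_one' := by
    refine Subtype.ext (funext fun x => funext fun y => ?_)
    show (1 : Γ) / 1 = 1
    simp
  map_mul' μ ν := by
    refine Subtype.ext (funext fun x => funext fun y => ?_)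
    exact (div_mul_div_comm _ _ _ _).symm

lemma betaHom_ker : ∀ μ ∈ (B2 (Mn n) Γ).subgroupOf (Z2 (Mn n) Γ), betaHom n Γ μ = 1 := by
  intro μ hμ
  have hb : IsCoboundary μ.1 := Subgroup.mem_subgroupOf.mp hμ
  obtain ⟨h, h1, h2⟩ := hb
  refine Subtype.ext (funext fun x => funext fun y => ?_)
  show μ.1 x y / μ.1 y x = 1
  rw [h2 x y, h2 y x, mul_comm y x]
  rw [div_eq_one]
  rw [mul_comm (h x) (h y)]

end Assemble

/-- For the free commutative monoid `ℕⁿ` and any abelian group `Γ`, the antisymmetrization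
map `[μ] ↦ ((x,y) ↦ μ(x,y)/μ(y,x))` is a group isomorphism
`H²(ℕⁿ, Γ) ≃ P_{a.s.}(ℕⁿ, Γ)`. -/
theorem H2_natPow_iso_pairings (n : ℕ) (Γ : Type*) [CommGroup Γ] :
    ∃ e : H2 (Multiplicative (Fin n → ℕ)) Γ ≃* PasN n Γ,
      ∀ μ : Z2 (Multiplicative (Fin n → ℕ)) Γ,
        ((e (QuotientGroup.mk μ) : Multiplicative (Fin n → ℕ) →
            Multiplicative (Fin n → ℕ) → Γ)) = fun x y => μ.1 x y / μ.1 y x := by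
  refine ⟨MulEquiv.ofBijective
    (QuotientGroup.lift _ (betaHom n Γ) (betaHom_ker n Γ)) ⟨?_, ?_⟩, fun μ => rfl⟩
  · apply (injective_iff_map_eq_one _).mpr
    intro a ha
    induction a using QuotientGroup.induction_on with
    | H z =>
      have ha' : betaHom n Γ z = 1 := ha
      have hsym : ∀ x y, z.1 x y = z.1 y x := by
        intro x y
        have h0 : z.1 x y / z.1 y x = 1 :=
          congrFun (congrFun (congrArg Subtype.val ha') x) y
        exact div_eq_one.mp h0
      exact (QuotientGroup.eq_one_iff _).mpr
        (Subgroup.mem_subgroupOf.mpr (symm_isCoboundary z.1 z.2 hsym))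
  · intro b
    obtain ⟨hb1, hb2, hb3, hb4⟩ := b.2
    refine ⟨QuotientGroup.mk ⟨cOf b.1, bimul_isCocycle _ (cOf_mul_left b.1) (cOf_mul_right b.1)⟩, ?_⟩
    exact Subtype.ext (funext fun x => funext fun y => cOf_div b.1 hb3 hb4 hb1 hb2 x y)
end
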